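/- arXiv:2510.02446 — 2 statements merged into one kernel-verified Lean document; each statement's English description precedes it below -/
import Mathlib

section
/- For independent G ~ Gamma(α,1) and E ~ Exp(1) with α > 0, the expectation E[(G − E)·1_{G > E}] equals α − (1 − 2^(-α)). -/
/-!
By independence the expectation is an iterated integral against `Gamma(α, 1) ⊗ Exp(1)`.
For fixed `x ≥ 0`, integrating against the exponential density gives
`E[(x - E)⁺] = x - (1 - e^{-x})`. Averaging over `G` leaves the mean `α` of `Gamma(α, 1)` and its
Laplace transform at `1`, which is `2^{-α}`: both follow from the fact that multiplying the gamma
density by `x` or by `e^{-tx}` gives a multiple of another gamma density.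
-/

open MeasureTheory ProbabilityTheory Real Set

lemma setIntegral_pos_eq_integral_posPart {Ω : Type*} [MeasurableSpace Ω] {μ : Measure Ω}
    {f : Ω → ℝ} (hf : Measurable f) :
    ∫ ω in {ω | 0 < f ω}, f ω ∂μ = ∫ ω, (f ω)⁺ ∂μ := by
  rw [← integral_indicator (measurableSet_lt measurable_const hf)]
  congr 1 with ω
  by_cases h : 0 < f ω
  · simp [h, posPart_of_nonneg h.le]
  · simp [h, posPart_eq_zero.2 (not_lt.1 h)]

namespace ProbabilityTheory

lemma measurable_gammaPDF (a r : ℝ) : Measurable (gammaPDF a r) :=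
  (measurable_gammaPDFReal a r).ennreal_ofReal

section Gamma

variable {a r : ℝ}

lemma integral_gammaMeasure (ha : 0 < a) (hr : 0 < r) (f : ℝ → ℝ) :
    ∫ x, f x ∂gammaMeasure a r = ∫ x, gammaPDFReal a r x * f x := by
  rw [gammaMeasure, integral_withDensity_eq_integral_toReal_smul
    (measurable_gammaPDF a r) (ae_of_all _ fun _ ↦ ENNReal.ofReal_lt_top)]
  simp_rw [gammaPDF, ENNReal.toReal_ofReal (gammaPDFReal_nonneg ha hr _), smul_eq_mul]

lemma integrable_gammaMeasure_iff (ha : 0 < a) (hr : 0 < r) {f : ℝ → ℝ} :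
    Integrable f (gammaMeasure a r) ↔ Integrable fun x ↦ gammaPDFReal a r x * f x := by
  rw [gammaMeasure, integrable_withDensity_iff (measurable_gammaPDF a r)
    (ae_of_all _ fun _ ↦ ENNReal.ofReal_lt_top)]
  simp_rw [gammaPDF, ENNReal.toReal_ofReal (gammaPDFReal_nonneg ha hr _), mul_comm (f _)]

lemma integrable_gammaPDFReal (ha : 0 < a) (hr : 0 < r) : Integrable (gammaPDFReal a r) := by
  have := isProbabilityMeasure_gammaMeasure ha hr
  simpa using (integrable_gammaMeasure_iff ha hr).1 (integrable_const (1 : ℝ))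

lemma integral_gammaPDFReal (ha : 0 < a) (hr : 0 < r) : ∫ x, gammaPDFReal a r x = 1 := by
  have := isProbabilityMeasure_gammaMeasure ha hr
  simpa using (integral_gammaMeasure ha hr fun _ ↦ 1).symm

lemma ae_nonneg_gammaMeasure : ∀ᵐ x ∂gammaMeasure a r, 0 ≤ x := by
  refine (ae_withDensity_iff (measurable_gammaPDF a r)).2 (ae_of_all _ ?_)
  intro x hx
  by_contra! hneg
  exact hx (gammaPDF_of_neg hneg)

lemma gammaPDFReal_mul_self (ha : 0 < a) (hr : 0 < r) (x : ℝ) :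
    gammaPDFReal a r x * x = a / r * gammaPDFReal (a + 1) r x := by
  unfold gammaPDFReal
  split_ifs with hx
  · rcases hx.eq_or_lt with rfl | hx
    · simp [zero_rpow ha.ne']
    · rw [Gamma_add_one ha.ne', add_sub_cancel_right, rpow_add_one hr.ne',
        rpow_sub_one hx.ne']
      field_simp
  · simp

lemma gammaPDFReal_mul_exp_neg_mul {t : ℝ} (hr : 0 ≤ r) (hrt : 0 < r + t) (x : ℝ) :
    gammaPDFReal a r x * exp (-(t * x)) = (r / (r + t)) ^ a * gammaPDFReal a (r + t) x := by
  unfold gammaPDFReal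
  split_ifs
  · rw [div_rpow hr hrt.le, add_mul, neg_add, exp_add]
    field_simp [(rpow_pos_of_pos hrt a).ne']
  · simp

lemma integrable_id_gammaMeasure (ha : 0 < a) (hr : 0 < r) :
    Integrable (fun x ↦ x) (gammaMeasure a r) := by
  simp_rw [integrable_gammaMeasure_iff ha hr, gammaPDFReal_mul_self ha hr]
  exact (integrable_gammaPDFReal (by positivity) hr).const_mul _

lemma integral_id_gammaMeasure (ha : 0 < a) (hr : 0 < r) :
    ∫ x, x ∂gammaMeasure a r = a / r := by
  rw [integral_gammaMeasure ha hr]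
  simp_rw [gammaPDFReal_mul_self ha hr]
  rw [integral_const_mul, integral_gammaPDFReal (by positivity) hr, mul_one]

variable {t : ℝ}

lemma integrable_exp_neg_mul_gammaMeasure (ha : 0 < a) (hr : 0 < r) (hrt : 0 < r + t) :
    Integrable (fun x ↦ exp (-(t * x))) (gammaMeasure a r) := by
  simp_rw [integrable_gammaMeasure_iff ha hr, gammaPDFReal_mul_exp_neg_mul hr.le hrt]
  exact (integrable_gammaPDFReal ha hrt).const_mul _

lemma integral_exp_neg_mul_gammaMeasure (ha : 0 < a) (hr : 0 < r) (hrt : 0 < r + t) :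
    ∫ x, exp (-(t * x)) ∂gammaMeasure a r = (r / (r + t)) ^ a := by
  simp_rw [integral_gammaMeasure ha hr, gammaPDFReal_mul_exp_neg_mul hr.le hrt, integral_const_mul,
    integral_gammaPDFReal ha hrt, mul_one]

end Gamma

lemma integral_posPart_sub_expMeasure {r x : ℝ} (hr : 0 < r) (hx : 0 ≤ x) :
    ∫ y, (x - y)⁺ ∂expMeasure r = x - (1 - exp (-(r * x))) / r := by
  have hdensity : (fun y ↦ gammaPDFReal 1 r y * (x - y)⁺)
      = (Icc 0 x).indicator fun y ↦ r * exp (-(r * y)) * (x - y) := by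
    ext y
    rcases le_or_gt y x with hyx | hyx
    · by_cases hy0 : 0 ≤ y <;> simp [gammaPDFReal, indicator, hy0, hyx]
    · simp [indicator, hyx.not_ge, posPart_eq_zero.2 (sub_nonpos.2 hyx.le)]
  have hderiv (y : ℝ) : HasDerivAt (fun y ↦ (y - x + 1 / r) * exp (-(r * y)))
      (r * exp (-(r * y)) * (x - y)) y := by
    have hexp : HasDerivAt (fun y ↦ exp (-(r * y))) (-(r * exp (-(r * y)))) y := by
      simpa [mul_comm] using ((hasDerivAt_id' y).const_mul (-r)).exp
    refine ((((hasDerivAt_id' y).sub_const x).add_const (1 / r)).fun_mul hexp).congr_deriv ?_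
    linear_combination exp (-(r * y)) * (one_div_mul_cancel hr.ne').symm
  rw [expMeasure, integral_gammaMeasure one_pos hr, hdensity, integral_indicator measurableSet_Icc,
    integral_Icc_eq_integral_Ioc, ← intervalIntegral.integral_of_le hx,
    intervalIntegral.integral_eq_sub_of_hasDerivAt (fun y _ ↦ hderiv y)
      ((by fun_prop : Continuous _).intervalIntegrable _ _)]
  simp only [mul_zero, neg_zero, exp_zero]
  field_simp
  ring

end ProbabilityTheory

/-- For independent `G ~ Gamma(α,1)` and `E ~ Exp(1)` with `α > 0`,
`E[(G − E)·1_{G > E}] = α − (1 − 2^(-α))`. -/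
theorem gamma_sub_exp_pos_part_expectation {Ω : Type*} [MeasurableSpace Ω]
    (μ : Measure Ω) [IsProbabilityMeasure μ] (α : ℝ) (hα : 0 < α) (G E : Ω → ℝ)
    (hG : Measurable G) (hE : Measurable E)
    (hGlaw : μ.map G = gammaMeasure α 1) (hElaw : μ.map E = expMeasure 1)
    (hInd : IndepFun G E μ) :
    ∫ ω in {ω | E ω < G ω}, (G ω - E ω) ∂μ = α - (1 - (2 : ℝ) ^ (-α)) := by
  have := isProbabilityMeasure_gammaMeasure hα one_pos
  have := isProbabilityMeasure_expMeasure one_pos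
  have hlaw : HasLaw (fun ω ↦ (G ω, E ω)) ((gammaMeasure α 1).prod (expMeasure 1)) μ :=
    hInd.hasLaw_prod ⟨hG.aemeasurable, hGlaw⟩ ⟨hE.aemeasurable, hElaw⟩
  have hG1 := integrable_id_gammaMeasure hα one_pos
  have hE1 : Integrable (fun y ↦ y) (expMeasure 1) := integrable_id_gammaMeasure one_pos one_pos
  have hint : Integrable (fun p : ℝ × ℝ ↦ (p.1 - p.2)⁺) ((gammaMeasure α 1).prod (expMeasure 1)) :=
    ((hG1.comp_fst _).sub (hE1.comp_snd _)).pos_part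
  have h11 : (0 : ℝ) < 1 + 1 := by norm_num
  have hexp := integrable_exp_neg_mul_gammaMeasure hα one_pos h11
  calc ∫ ω in {ω | E ω < G ω}, (G ω - E ω) ∂μ
      = ∫ ω, (G ω - E ω)⁺ ∂μ := by
        simpa only [sub_pos] using
          setIntegral_pos_eq_integral_posPart (μ := μ) (f := fun ω ↦ G ω - E ω) (hG.sub hE)
    _ = ∫ p, (p.1 - p.2)⁺ ∂(gammaMeasure α 1).prod (expMeasure 1) :=
        hlaw.integral_comp hint.aestronglyMeasurable
    _ = ∫ x, ∫ y, (x - y)⁺ ∂expMeasure 1 ∂gammaMeasure α 1 := integral_prod _ hint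
    _ = ∫ x, x - (1 - exp (-(1 * x))) ∂gammaMeasure α 1 :=
        integral_congr_ae <| ae_nonneg_gammaMeasure.mono fun x hx ↦ by
          dsimp only
          rw [integral_posPart_sub_expMeasure one_pos hx, div_one]
    _ = (∫ x, x ∂gammaMeasure α 1) - (1 - ∫ x, exp (-(1 * x)) ∂gammaMeasure α 1) := by
        rw [integral_sub hG1 ((integrable_const 1).sub' hexp), integral_sub (integrable_const 1) hexp,
          integral_const, probReal_univ, one_smul]
    _ = α - (1 - (2 : ℝ) ^ (-α)) := by
        rw [integral_id_gammaMeasure hα one_pos, integral_exp_neg_mul_gammaMeasure hα one_pos h11,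
          one_add_one_eq_two, one_div, inv_rpow zero_le_two, rpow_neg zero_le_two, div_one]
end

section
/- Let E ~ Exp(1) and G ~ Gamma(α,1) be independent with α > 0, and let Z = (1 + N)·1_{G > E} where, conditional on (G, E), N is Poisson with mean (G − E)⁺. Then E[Z] = α. -/
/-!
Conditionally on `(G, E)`, the mean of `1 + N` is `1 + (G - E)⁺`, so
`E[Z] = E[(1 + G - E) 1_{E < G}]`. Integrating out `E` first, `∫₀ᵍ e^{-x} (1 + g - x) dx = g` for
`g > 0` (an antiderivative is `e^{-x} (x - g)`), so what remains is the mean `α` of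
`G ~ Gamma(α, 1)`.
-/

open MeasureTheory ProbabilityTheory Real Set
open scoped ENNReal Nat

lemma integral_indicator_one_add_natCast {Ω : Type*} [MeasurableSpace Ω] {μ : Measure Ω}
    {N : Ω → ℕ} {s : Set Ω} (hs : MeasurableSet s) (hN : Measurable N) :
    ∫ ω, s.indicator (fun ω => 1 + (N ω : ℝ)) ω ∂μ = (∫⁻ ω in s, (1 + (N ω : ℝ≥0∞)) ∂μ).toReal := by
  have hmeas : Measurable fun ω => 1 + (N ω : ℝ≥0∞) := by fun_prop
  rw [← lintegral_indicator hs, ← integral_toReal (hmeas.indicator hs).aemeasurable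
    (ae_of_all _ fun ω => by by_cases h : ω ∈ s <;> simp [h])]
  congr with ω
  by_cases h : ω ∈ s <;> simp [h, ENNReal.toReal_add]

section PoissonMean

lemma hasSum_natCast_mul_pow_div_factorial (m : ℝ) :
    HasSum (fun k : ℕ => (k : ℝ) * (m ^ k / k !)) (m * exp m) := by
  have hshift :
      HasSum (fun k : ℕ => ((k + 1 : ℕ) : ℝ) * (m ^ (k + 1) / (k + 1)!)) (m * exp m) := by
    rw [exp_eq_exp_ℝ]
    refine ((NormedSpace.expSeries_div_hasSum_exp m).mul_left m).congr_fun fun k => ?_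
    rw [Nat.factorial_succ, pow_succ]
    push_cast
    field_simp
  exact (hasSum_nat_add_iff' 1).mp (by simpa using hshift)

lemma hasSum_one_add_mul_poisson (m : ℝ) :
    HasSum (fun k : ℕ => (1 + (k : ℝ)) * (exp (-m) * m ^ k / k !)) (1 + m) := by
  have h := ((NormedSpace.expSeries_div_hasSum_exp m).add
    (hasSum_natCast_mul_pow_div_factorial m)).mul_left (exp (-m))
  rw [← exp_eq_exp_ℝ, ← one_add_mul, mul_comm (1 + m), ← mul_assoc, ← exp_add, neg_add_cancel,
    exp_zero, one_mul] at h
  exact h.congr_fun fun k => by ring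

lemma tsum_one_add_mul_ofReal_poisson {m : ℝ} (hm : 0 ≤ m) :
    ∑' k : ℕ, (1 + (k : ℝ≥0∞)) * ENNReal.ofReal (exp (-m) * m ^ k / k !) =
      ENNReal.ofReal (1 + m) := by
  rw [← (hasSum_one_add_mul_poisson m).tsum_eq,
    ENNReal.ofReal_tsum_of_nonneg (fun k => by positivity) (hasSum_one_add_mul_poisson m).summable]
  refine tsum_congr fun k => ?_
  rw [ENNReal.ofReal_mul (by positivity), ENNReal.ofReal_add zero_le_one k.cast_nonneg,
    ENNReal.ofReal_one, ENNReal.ofReal_natCast]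

lemma setLIntegral_one_add_eq_of_condPoisson {Ω β : Type*} [MeasurableSpace Ω]
    [MeasurableSpace β] {μ : Measure Ω} {X : Ω → β} {N : Ω → ℕ} {m : β → ℝ}
    (hX : Measurable X) (hN : Measurable N) (hm : Measurable m) (hm_nonneg : ∀ x, 0 ≤ m x)
    (hcond : ∀ (k : ℕ) (s : Set β), MeasurableSet s →
      μ {ω | N ω = k ∧ X ω ∈ s} =
        ∫⁻ ω in X ⁻¹' s, ENNReal.ofReal (exp (-m (X ω)) * m (X ω) ^ k / k !) ∂μ)
    {s : Set β} (hs : MeasurableSet s) :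
    ∫⁻ ω in X ⁻¹' s, (1 + (N ω : ℝ≥0∞)) ∂μ =
      ∫⁻ ω in X ⁻¹' s, ENNReal.ofReal (1 + m (X ω)) ∂μ := by
  have hlevel : ∀ k : ℕ, MeasurableSet {ω | N ω = k} := fun k => hN (measurableSet_singleton k)
  have hsplit : ∀ ω, 1 + (N ω : ℝ≥0∞) =
      ∑' k : ℕ, {ω | N ω = k}.indicator (fun _ => 1 + (k : ℝ≥0∞)) ω := fun ω => by
    rw [tsum_eq_single (N ω) fun k hk => by simp [Ne.symm hk]]
    simp
  have hterm : ∀ k : ℕ,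
      ∫⁻ ω in X ⁻¹' s, {ω | N ω = k}.indicator (fun _ => 1 + (k : ℝ≥0∞)) ω ∂μ =
        ∫⁻ ω in X ⁻¹' s, (1 + (k : ℝ≥0∞)) *
          ENNReal.ofReal (exp (-m (X ω)) * m (X ω) ^ k / k !) ∂μ := fun k => by
    rw [lintegral_indicator_const (hlevel k), Measure.restrict_apply (hlevel k),
      lintegral_const_mul' _ _ (by simp)]
    exact congrArg _ (hcond k s hs)
  simp_rw [hsplit]
  rw [lintegral_tsum fun k => (measurable_const.indicator (hlevel k)).aemeasurable,
    tsum_congr hterm, ← lintegral_tsum fun k => by fun_prop]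
  exact lintegral_congr fun ω => tsum_one_add_mul_ofReal_poisson (hm_nonneg _)

end PoissonMean

section GammaExp

lemma expMeasure_Iio_of_nonpos {r x : ℝ} (hx : x ≤ 0) : expMeasure r (Iio x) = 0 := by
  rw [expMeasure, gammaMeasure, withDensity_apply _ measurableSet_Iio]
  exact lintegral_exponentialPDF_of_nonpos hx

lemma integral_exp_neg_mul_one_add_sub (g : ℝ) :
    ∫ x in (0 : ℝ)..g, exp (-x) * (1 + g - x) = g := by
  have hderiv : ∀ x ∈ uIcc (0 : ℝ) g,
      HasDerivAt (fun y => exp (-y) * (y - g)) (exp (-x) * (1 + g - x)) x := fun x _ =>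
    ((hasDerivAt_neg x).exp.fun_mul ((hasDerivAt_id' x).sub_const g)).congr_deriv (by ring)
  rw [intervalIntegral.integral_eq_sub_of_hasDerivAt hderiv
    (Continuous.intervalIntegrable (by fun_prop) 0 g)]
  simp

lemma setLIntegral_expMeasure_one_add_sub (g : ℝ) :
    ∫⁻ e in Iio g, ENNReal.ofReal (1 + (g - e)) ∂expMeasure 1 = ENNReal.ofReal g := by
  have hpdf : Measurable (gammaPDF 1 1) := (measurable_gammaPDFReal 1 1).ennreal_ofReal
  rcases le_or_gt g 0 with hg | hg
  · rw [ENNReal.ofReal_of_nonpos hg]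
    exact setLIntegral_measure_zero _ _ (expMeasure_Iio_of_nonpos hg)
  rw [← Iio_union_Ico_eq_Iio hg.le, lintegral_union measurableSet_Ico
      ((Iio_disjoint_Ici le_rfl).mono_right Ico_subset_Ici_self),
    setLIntegral_measure_zero _ _ (expMeasure_Iio_of_nonpos le_rfl), zero_add, expMeasure,
    gammaMeasure, setLIntegral_withDensity_eq_setLIntegral_mul _ hpdf
      (by fun_prop) measurableSet_Ico]
  have hdens : EqOn (gammaPDF 1 1 * fun e => ENNReal.ofReal (1 + (g - e)))
      (fun e => ENNReal.ofReal (exp (-e) * (1 + g - e))) (Ico 0 g) := fun e he => by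
    change exponentialPDF 1 e * _ = _
    rw [exponentialPDF_of_nonneg he.1, ← ENNReal.ofReal_mul (by positivity)]
    ring_nf
  have hpos : ∀ e ∈ Ico 0 g, 0 ≤ exp (-e) * (1 + g - e) := fun e he =>
    mul_nonneg (exp_pos _).le (by linarith [he.2])
  rw [setLIntegral_congr_fun measurableSet_Ico hdens, ← ofReal_integral_eq_lintegral_ofReal
      ((Continuous.integrableOn_Icc (by fun_prop)).mono_set Ico_subset_Icc_self)
      ((ae_restrict_iff' measurableSet_Ico).mpr (ae_of_all _ hpos)),
    integral_Ico_eq_integral_Ioo, ← integral_Ioc_eq_integral_Ioo,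
    ← intervalIntegral.integral_of_le hg.le, integral_exp_neg_mul_one_add_sub]

lemma gammaPDF_mul_ofReal {a r : ℝ} (ha : 0 < a) (hr : 0 < r) (x : ℝ) :
    gammaPDF a r x * ENNReal.ofReal x = ENNReal.ofReal (a / r) * gammaPDF (a + 1) r x := by
  rcases lt_or_ge x 0 with hx | hx
  · simp [gammaPDF_of_neg hx]
  rw [gammaPDF_of_nonneg hx, gammaPDF_of_nonneg hx, ← ENNReal.ofReal_mul (by positivity),
    ← ENNReal.ofReal_mul (by positivity)]
  have hpow : x ^ a = x ^ (a - 1) * x := by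
    rw [← rpow_add_one' hx (by simpa using ha.ne'), sub_add_cancel]
  rw [add_sub_cancel_right, hpow, rpow_add_one hr.ne', Gamma_add_one ha.ne']
  have : 0 < Gamma a := Gamma_pos_of_pos ha
  field_simp

lemma lintegral_ofReal_gammaMeasure {a r : ℝ} (ha : 0 < a) (hr : 0 < r) :
    ∫⁻ x, ENNReal.ofReal x ∂gammaMeasure a r = ENNReal.ofReal (a / r) := by
  have hpdf : Measurable (gammaPDF a r) := (measurable_gammaPDFReal a r).ennreal_ofReal
  rw [gammaMeasure, lintegral_withDensity_eq_lintegral_mul _ hpdf ENNReal.measurable_ofReal]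
  simp_rw [Pi.mul_apply, gammaPDF_mul_ofReal ha hr]
  rw [lintegral_const_mul' _ _ ENNReal.ofReal_ne_top, lintegral_gammaPDF_eq_one (by linarith) hr,
    mul_one]

lemma setLIntegral_gammaMeasure_prod_expMeasure {a : ℝ} (ha : 0 < a) :
    ∫⁻ p in {p : ℝ × ℝ | p.2 < p.1}, ENNReal.ofReal (1 + (p.1 - p.2))
      ∂(gammaMeasure a 1).prod (expMeasure 1) = ENNReal.ofReal a := by
  have := isProbabilityMeasure_expMeasure one_pos
  rw [← lintegral_indicator (measurableSet_lt measurable_snd measurable_fst),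
    lintegral_prod _ ((Measurable.indicator (by fun_prop)
      (measurableSet_lt measurable_snd measurable_fst)).aemeasurable)]
  calc ∫⁻ g, ∫⁻ e, {p : ℝ × ℝ | p.2 < p.1}.indicator
          (fun p => ENNReal.ofReal (1 + (p.1 - p.2))) (g, e) ∂expMeasure 1 ∂gammaMeasure a 1
      = ∫⁻ g, ENNReal.ofReal g ∂gammaMeasure a 1 := lintegral_congr fun g => by
        rw [← setLIntegral_expMeasure_one_add_sub g, ← lintegral_indicator measurableSet_Iio]
        rfl
    _ = ENNReal.ofReal a := by rw [lintegral_ofReal_gammaMeasure ha one_pos, div_one]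

end GammaExp

theorem conversion_expected_white_general {Ω : Type*} [MeasurableSpace Ω]
    (μ : Measure Ω) (α : ℝ) (hα : 0 < α)
    (G E : Ω → ℝ) (hG : Measurable G) (hE : Measurable E)
    (hGlaw : μ.map G = gammaMeasure α 1) (hElaw : μ.map E = expMeasure 1)
    (hIndGE : IndepFun G E μ)
    (N : Ω → ℕ) (hN : Measurable N)
    (hcond : ∀ (k : ℕ) (s : Set (ℝ × ℝ)), MeasurableSet s →
      μ {ω | N ω = k ∧ (G ω, E ω) ∈ s} =
        ∫⁻ ω in (fun ω => (G ω, E ω)) ⁻¹' s,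
          ENNReal.ofReal (Real.exp (-(max (G ω - E ω) 0)) *
            (max (G ω - E ω) 0) ^ k / (Nat.factorial k)) ∂μ) :
    ∫ ω, Set.indicator {ω | E ω < G ω} (fun ω => 1 + (N ω : ℝ)) ω ∂μ = α := by
  set X : Ω → ℝ × ℝ := fun ω => (G ω, E ω)
  have hX : Measurable X := hG.prodMk hE
  have hT : MeasurableSet {p : ℝ × ℝ | p.2 < p.1} := measurableSet_lt measurable_snd measurable_fst
  have := isProbabilityMeasure_gammaMeasure hα one_pos
  have := isProbabilityMeasure_expMeasure one_pos
  have hlaw : μ.map X = (gammaMeasure α 1).prod (expMeasure 1) := by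
    rw [← hGlaw, ← hElaw]
    exact (indepFun_iff_map_prod_eq_prod_map_map' hG.aemeasurable hE.aemeasurable
      (hGlaw ▸ inferInstance) (hElaw ▸ inferInstance)).mp hIndGE
  calc ∫ ω, {ω | E ω < G ω}.indicator (fun ω => 1 + (N ω : ℝ)) ω ∂μ
      = (∫⁻ ω in X ⁻¹' {p | p.2 < p.1}, (1 + (N ω : ℝ≥0∞)) ∂μ).toReal :=
        integral_indicator_one_add_natCast (hX hT) hN
    _ = (∫⁻ ω in X ⁻¹' {p | p.2 < p.1},
          ENNReal.ofReal (1 + max ((X ω).1 - (X ω).2) 0) ∂μ).toReal := by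
        rw [setLIntegral_one_add_eq_of_condPoisson (m := fun p => max (p.1 - p.2) 0) hX hN
          (by fun_prop) (fun _ => le_max_right _ _) hcond hT]
    _ = (∫⁻ p in {p | p.2 < p.1}, ENNReal.ofReal (1 + (p.1 - p.2)) ∂μ.map X).toReal := by
        rw [setLIntegral_map hT (by fun_prop) hX]
        refine congrArg _ (setLIntegral_congr_fun (hX hT) fun ω (hω : E ω < G ω) => ?_)
        rw [max_eq_left (sub_nonneg.2 hω.le)]
    _ = α := by
        rw [hlaw, setLIntegral_gammaMeasure_prod_expMeasure hα, ENNReal.toReal_ofReal hα.le]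

/-- Let `E ~ Exp(1)` and `G ~ Gamma(α,1)` be independent with `α > 0`, and let
`Z = (1 + N)·1_{G > E}` where, conditionally on `(G, E)`, `N` is Poisson with
mean `(G − E)⁺`. Then `E[Z] = α`. The conditional Poisson property is expressed
via the joint law of `N` and `(G, E)`. -/
theorem conversion_expected_white {Ω : Type*} [MeasurableSpace Ω]
    (μ : Measure Ω) [IsProbabilityMeasure μ] (α : ℝ) (hα : 0 < α)
    (G E : Ω → ℝ) (hG : Measurable G) (hE : Measurable E)
    (hGlaw : μ.map G = gammaMeasure α 1) (hElaw : μ.map E = expMeasure 1)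
    (hIndGE : IndepFun G E μ)
    (N : Ω → ℕ) (hN : Measurable N)
    (hcond : ∀ (k : ℕ) (s : Set (ℝ × ℝ)), MeasurableSet s →
      μ {ω | N ω = k ∧ (G ω, E ω) ∈ s} =
        ∫⁻ ω in (fun ω => (G ω, E ω)) ⁻¹' s,
          ENNReal.ofReal (Real.exp (-(max (G ω - E ω) 0)) *
            (max (G ω - E ω) 0) ^ k / (Nat.factorial k)) ∂μ) :
    ∫ ω, Set.indicator {ω | E ω < G ω} (fun ω => 1 + (N ω : ℝ)) ω ∂μ = α :=
  conversion_expected_white_general μ α hα G E hG hE hGlaw hElaw hIndGE N hN hcond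
end
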